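/- arXiv:1303.2760 — 3 statements merged into one kernel-verified Lean document; each statement's English description precedes it below -/
import Mathlib

section
/- Suppose the pair (A, B) with A = [[A11, A12],[A21, A22]] and B = [B1; B2] is controllable, i.e., [λI - A, B] has full row rank n for all complex λ. Then for any (n-p)×p matrix K, the pencil [[λI - A11, -A12, B1, -I_p],[-A21, λI - A22, B2, K]] has full row rank n for every complex λ. -/
open Matrix

/-! Deleting the last block column `[-I; K]` of the pencil leaves exactly the PBH matrix
`[λI - A, B]`, which has full row rank `n`; adding columns cannot lower the rank, and the pencil
has only `n` rows. -/

theorem Matrix.rank_eq_card_height_of_rank_submatrix {R m n n₀ : Type*} [CommSemiring R]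
    [StrongRankCondition R] [Fintype m] [Fintype n] [Fintype n₀] (M : Matrix m n R)
    (c : n₀ → n) (h : (M.submatrix id c).rank = Fintype.card m) :
    M.rank = Fintype.card m :=
  le_antisymm M.rank_le_card_height (h ▸ M.rank_submatrix_le id c)

theorem Matrix.fromCols_fromBlocks_submatrix_inl {R l m₁ m₂ n₁ n₂ : Type*}
    (M : Matrix (m₁ ⊕ m₂) l R) (B₁ : Matrix m₁ n₁ R) (C₁ : Matrix m₁ n₂ R)
    (B₂ : Matrix m₂ n₁ R) (C₂ : Matrix m₂ n₂ R) :
    (fromCols M (fromBlocks B₁ C₁ B₂ C₂)).submatrix id (Sum.map id Sum.inl) =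
      fromCols M (fromRows B₁ B₂) := by
  ext (i | i) (j | j) <;> rfl

theorem Matrix.smul_one_sub_fromBlocks {R m n : Type*} [Ring R] [DecidableEq m] [DecidableEq n]
    (l : R) (A₁₁ : Matrix m m R) (A₁₂ : Matrix m n R) (A₂₁ : Matrix n m R)
    (A₂₂ : Matrix n n R) :
    l • (1 : Matrix (m ⊕ n) (m ⊕ n) R) - fromBlocks A₁₁ A₁₂ A₂₁ A₂₂ =
      fromBlocks (l • 1 - A₁₁) (-A₁₂) (-A₂₁) (l • 1 - A₂₂) := by
  rw [← fromBlocks_one, fromBlocks_smul, sub_eq_add_neg, fromBlocks_neg, fromBlocks_add]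
  simp [sub_eq_add_neg]

theorem stmt_7 (p q m : ℕ)
    (A11 : Matrix (Fin p) (Fin p) ℂ) (A12 : Matrix (Fin p) (Fin q) ℂ)
    (A21 : Matrix (Fin q) (Fin p) ℂ) (A22 : Matrix (Fin q) (Fin q) ℂ)
    (B1 : Matrix (Fin p) (Fin m) ℂ) (B2 : Matrix (Fin q) (Fin m) ℂ)
    (hctrb : ∀ l : ℂ,
      (Matrix.fromCols
        (l • (1 : Matrix (Fin p ⊕ Fin q) (Fin p ⊕ Fin q) ℂ) -
          fromBlocks A11 A12 A21 A22)
        (Matrix.fromRows B1 B2)).rank = p + q)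
    (K : Matrix (Fin q) (Fin p) ℂ) :
    ∀ l : ℂ,
      (Matrix.fromCols
        (fromBlocks (l • (1 : Matrix (Fin p) (Fin p) ℂ) - A11) (-A12)
          (-A21) (l • (1 : Matrix (Fin q) (Fin q) ℂ) - A22))
        (fromBlocks B1 (-(1 : Matrix (Fin p) (Fin p) ℂ)) B2 K)).rank = p + q := by
  intro l
  have hcard : Fintype.card (Fin p ⊕ Fin q) = p + q := by simp
  rw [← hcard]
  refine rank_eq_card_height_of_rank_submatrix _ (Sum.map id Sum.inl) ?_
  rw [fromCols_fromBlocks_submatrix_inl, ← smul_one_sub_fromBlocks, hctrb l, hcard]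
end

section
/- Suppose (A, B) is controllable with A = [[A11, A12],[A21, A22]], B = [B1; B2]. Then for every complex λ, the matrix [[A11 - λI, A12, B1, 0],[A21, A22 - λI, B2, 0],[λ I_p, 0, 0, I_p]] has full row rank n + p. -/
/-!
Full row rank means that `mulVec` is surjective. Up to a sign, the top block row is
`[A - λI, B, 0]`, which is onto by the controllability (Hautus) hypothesis; once its coordinates
are solved for, the last `p` coordinates are free and the identity block `I_p` hits the bottom rows.
-/

open Matrix

namespace Matrix

variable {m n k r s : Type*} [Fintype n] [Fintype k] [Fintype r] [Fintype s]

theorem rank_eq_card_iff_surjective_mulVec {K : Type*} [Field K] [Fintype m] (M : Matrix m n K) :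
    M.rank = Fintype.card m ↔ Function.Surjective M.mulVec := by
  rw [rank, ← Module.finrank_fintype_fun_eq_card K]
  change _ ↔ Function.Surjective M.mulVecLin
  rw [← LinearMap.range_eq_top]
  exact ⟨Submodule.eq_top_of_finrank_eq, fun h => by rw [h, finrank_top]⟩

variable {R : Type*} [Ring R]

theorem surjective_mulVec_fromCols_neg_left {X : Matrix m k R} {Y : Matrix m r R}
    (h : Function.Surjective (fromCols X Y).mulVec) :
    Function.Surjective (fromCols (-X) Y).mulVec := by
  intro y
  obtain ⟨v, hv⟩ := h y
  refine ⟨Sum.elim (-(v ∘ Sum.inl)) (v ∘ Sum.inr), ?_⟩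
  rw [fromCols_mulVec_sumElim, neg_mulVec_neg, ← fromCols_mulVec_sumElim]
  simpa using hv

theorem surjective_mulVec_fromRows_fromCols_one [DecidableEq s]
    {X : Matrix m k R} {Y : Matrix m r R} (C : Matrix s k R)
    (h : Function.Surjective (fromCols X Y).mulVec) :
    Function.Surjective
      (fromRows (fromCols X (fromCols Y (0 : Matrix m s R)))
        (fromCols C (fromCols (0 : Matrix s r R) 1))).mulVec := by
  intro y
  obtain ⟨v, hv⟩ := h (y ∘ Sum.inl)
  refine ⟨Sum.elim (v ∘ Sum.inl) (Sum.elim (v ∘ Sum.inr) (y ∘ Sum.inr - C *ᵥ (v ∘ Sum.inl))), ?_⟩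
  have htop : X *ᵥ (v ∘ Sum.inl) + Y *ᵥ (v ∘ Sum.inr) = y ∘ Sum.inl := by
    rw [← fromCols_mulVec_sumElim]
    simpa using hv
  ext (i | i) <;>
    simp only [fromRows_mulVec, Sum.elim_inl, Sum.elim_inr, fromCols_mulVec_sumElim]
  · simpa using congrFun htop i
  · simp

end Matrix

theorem stmt_8 (p q m : ℕ)
    (A11 : Matrix (Fin p) (Fin p) ℂ) (A12 : Matrix (Fin p) (Fin q) ℂ)
    (A21 : Matrix (Fin q) (Fin p) ℂ) (A22 : Matrix (Fin q) (Fin q) ℂ)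
    (B1 : Matrix (Fin p) (Fin m) ℂ) (B2 : Matrix (Fin q) (Fin m) ℂ)
    (hctrb : ∀ l : ℂ,
      (Matrix.fromCols
        (l • (1 : Matrix (Fin p ⊕ Fin q) (Fin p ⊕ Fin q) ℂ) -
          fromBlocks A11 A12 A21 A22)
        (Matrix.fromRows B1 B2)).rank = p + q) :
    ∀ l : ℂ,
      (Matrix.fromRows
        (Matrix.fromCols
          (fromBlocks (A11 - l • (1 : Matrix (Fin p) (Fin p) ℂ)) A12
            A21 (A22 - l • (1 : Matrix (Fin q) (Fin q) ℂ)))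
          (fromBlocks B1 0 B2 0))
        (Matrix.fromCols
          (Matrix.fromCols (l • (1 : Matrix (Fin p) (Fin p) ℂ)) 0)
          (Matrix.fromCols 0 (1 : Matrix (Fin p) (Fin p) ℂ)))).rank
        = p + q + p := by
  intro l
  have hsurj := (rank_eq_card_iff_surjective_mulVec
    (fromCols (l • 1 - fromBlocks A11 A12 A21 A22) (fromRows B1 B2))).1 (by simpa using hctrb l)
  have hA : fromBlocks (A11 - l • (1 : Matrix (Fin p) (Fin p) ℂ)) A12
      A21 (A22 - l • (1 : Matrix (Fin q) (Fin q) ℂ)) =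
      -(l • (1 : Matrix (Fin p ⊕ Fin q) (Fin p ⊕ Fin q) ℂ) - fromBlocks A11 A12 A21 A22) := by
    rw [neg_sub, ← fromBlocks_one, fromBlocks_smul]
    ext (i | i) (j | j) <;> simp
  have hB : fromBlocks B1 (0 : Matrix (Fin p) (Fin p) ℂ) B2 0 = fromCols (fromRows B1 B2) 0 := by
    rw [← fromRows_zero, fromCols_fromRows_eq_fromBlocks]
  rw [hA, hB, show p + q + p = Fintype.card ((Fin p ⊕ Fin q) ⊕ Fin p) by simp]
  exact (rank_eq_card_iff_surjective_mulVec _).2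
    (surjective_mulVec_fromRows_fromCols_one (fromCols (l • 1) 0)
      (surjective_mulVec_fromCols_neg_left hsurj))
end

section
/- Let A⁺ = [[A11 + F1, -A12],[-(A21 + F2), A22]] and suppose V = [V1; V2] spans a p-dimensional invariant subspace of A⁺ (so A⁺ V = V Λ for some p×p matrix Λ) with V1 invertible. Then K := V2 V1^{-1} satisfies the Riccati equation K(A11 + F1) - A22 K - K A12 K + (A21 + F2) = 0, and A11 + F1 - A12 K = V1 Λ V1^{-1}; in particular if Λ has all eigenvalues in the open left half plane then K is a stabilizing solution. -/
/-!
The columns of `[V₁; V₂]` span an `A⁺`-invariant subspace, and when `V₁` is invertible this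
subspace is the graph of `K = V₂ V₁⁻¹`. Reading the two block rows of `A⁺ V = V Λ` through this
graph shows that the closed-loop matrix `A₁₁ + F₁ - A₁₂ K` is `V₁ Λ V₁⁻¹`, and that `K` carries it
to the bottom block row, which is the Riccati equation. Similarity preserves the spectrum.
-/

open Matrix

namespace Matrix

variable {R m n : Type*} [CommRing R] [Fintype m] [Fintype n]

theorem fromBlocks_mul_fromRows_eq_fromRows_mul_iff {o : Type*} [Fintype o]
    (A : Matrix m m R) (B : Matrix m n R) (C : Matrix n m R) (D : Matrix n n R)
    (V₁ : Matrix m o R) (V₂ : Matrix n o R) (Λ : Matrix o o R) :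
    fromBlocks A B C D * fromRows V₁ V₂ = fromRows V₁ V₂ * Λ ↔
      A * V₁ + B * V₂ = V₁ * Λ ∧ C * V₁ + D * V₂ = V₂ * Λ := by
  rw [fromBlocks_mul_fromRows, fromRows_mul, fromRows_ext_iff]

theorem spectrum_mul_mul_nonsing_inv [DecidableEq m] {V₁ : Matrix m m R} (hV₁ : IsUnit V₁)
    (Λ : Matrix m m R) : spectrum R (V₁ * Λ * V₁⁻¹) = spectrum R Λ := by
  rw [← hV₁.unit_spec, ← coe_units_inv, spectrum.units_conjugate]

variable [DecidableEq m] {V₁ : Matrix m m R} (hV₁ : IsUnit V₁.det)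
include hV₁

theorem add_mul_mul_nonsing_inv_of_mul_add_mul_eq {k : Type*} {A : Matrix k m R}
    {B : Matrix k n R} {V₂ : Matrix n m R} {W : Matrix k m R} (h : A * V₁ + B * V₂ = W) :
    A + B * (V₂ * V₁⁻¹) = W * V₁⁻¹ := by
  rw [← h, Matrix.add_mul, Matrix.mul_assoc, mul_nonsing_inv _ hV₁, Matrix.mul_one,
    Matrix.mul_assoc]

theorem riccati_of_fromBlocks_mul_fromRows_eq {A : Matrix m m R} {B : Matrix m n R}
    {C : Matrix n m R} {D : Matrix n n R} {V₂ : Matrix n m R} {Λ : Matrix m m R}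
    (h₁ : A * V₁ + B * V₂ = V₁ * Λ) (h₂ : C * V₁ + D * V₂ = V₂ * Λ) :
    V₂ * V₁⁻¹ * (A + B * (V₂ * V₁⁻¹)) = C + D * (V₂ * V₁⁻¹) := by
  rw [add_mul_mul_nonsing_inv_of_mul_add_mul_eq hV₁ h₁,
    add_mul_mul_nonsing_inv_of_mul_add_mul_eq hV₁ h₂, Matrix.mul_assoc V₂,
    ← Matrix.mul_assoc V₁⁻¹, ← Matrix.mul_assoc V₁⁻¹, nonsing_inv_mul _ hV₁, Matrix.one_mul,
    Matrix.mul_assoc]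

end Matrix

theorem stmt_10 (p q : ℕ)
    (A11 F1 Λ V1 : Matrix (Fin p) (Fin p) ℂ) (A12 : Matrix (Fin p) (Fin q) ℂ)
    (A21 F2 V2 : Matrix (Fin q) (Fin p) ℂ) (A22 : Matrix (Fin q) (Fin q) ℂ)
    (Aplus : Matrix (Fin p ⊕ Fin q) (Fin p ⊕ Fin q) ℂ)
    (hAplus : Aplus = fromBlocks (A11 + F1) (-A12) (-(A21 + F2)) A22)
    (hinv : Aplus * Matrix.fromRows V1 V2 = Matrix.fromRows V1 V2 * Λ)
    (hV1 : IsUnit V1)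
    (K : Matrix (Fin q) (Fin p) ℂ) (hK : K = V2 * V1⁻¹) :
    K * (A11 + F1) - A22 * K - K * A12 * K + (A21 + F2) = 0 ∧
    A11 + F1 - A12 * K = V1 * Λ * V1⁻¹ ∧
    ((∀ μ ∈ spectrum ℂ Λ, μ.re < 0) →
      ∀ μ ∈ spectrum ℂ (A11 + F1 - A12 * K), μ.re < 0) := by
  have hdet : IsUnit V1.det := (isUnit_iff_isUnit_det V1).mp hV1
  rw [hAplus, fromBlocks_mul_fromRows_eq_fromRows_mul_iff] at hinv
  obtain ⟨htop, hbottom⟩ := hinv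
  have hclosed : A11 + F1 - A12 * K = V1 * Λ * V1⁻¹ := by
    simpa only [hK, Matrix.neg_mul, ← sub_eq_add_neg] using
      add_mul_mul_nonsing_inv_of_mul_add_mul_eq hdet htop
  have hriccati : K * (A11 + F1 - A12 * K) = -(A21 + F2) + A22 * K := by
    simpa only [hK, Matrix.neg_mul, ← sub_eq_add_neg] using
      riccati_of_fromBlocks_mul_fromRows_eq hdet htop hbottom
  refine ⟨?_, hclosed, fun hΛ => ?_⟩
  · rw [Matrix.mul_sub, ← Matrix.mul_assoc] at hriccati
    rw [sub_right_comm, hriccati]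
    abel
  · rwa [hclosed, spectrum_mul_mul_nonsing_inv hV1]
end
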